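/- Let K be an algebraically closed field, k ≥ 1, and let X = (V₁, V₂, α, β, η) be a finite-dimensional Γ_con-module. The following are equivalent: (i) the only morphism of representations M₁ → X is zero; (ii) the only morphism of representations X → M₂ is zero; (iii) V₁ = 0, i.e. X is filtered by the simple S₂ alone. -/

import Mathlib

/-- A finite-dimensional module over the contraction algebra `Γ_con` (the path algebra of
the quiver with two vertices, arrows `a : 1 → 2`, `b : 2 → 1` and a loop `y` at vertex `2`,
modulo `y^k = ba`, `ay = 0`, `yb = 0`), given concretely as a representation
`(V₁, V₂, α, β, η)` with `α ∘ β = η^k`, `η ∘ α = 0` and `β ∘ η = 0`. -/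
structure GamRep (K : Type) [Field K] (k : ℕ) : Type 1 where
  V1 : Type
  V2 : Type
  [acg1 : AddCommGroup V1]
  [acg2 : AddCommGroup V2]
  [mod1 : Module K V1]
  [mod2 : Module K V2]
  [fd1 : FiniteDimensional K V1]
  [fd2 : FiniteDimensional K V2]
  α : V1 →ₗ[K] V2
  β : V2 →ₗ[K] V1
  η : V2 →ₗ[K] V2
  rel1 : α ∘ₗ β = η ^ k
  rel2 : η ∘ₗ α = 0
  rel3 : β ∘ₗ η = 0

attribute [instance] GamRep.acg1 GamRep.acg2 GamRep.mod1 GamRep.mod2 GamRep.fd1 GamRep.fd2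

namespace GamRep

variable {K : Type} [Field K] {k : ℕ}

/-- A morphism of `Γ_con`-modules is a pair of linear maps commuting with the three
structure maps. -/
def IsHom (M N : GamRep K k) (φ1 : M.V1 →ₗ[K] N.V1) (φ2 : M.V2 →ₗ[K] N.V2) : Prop :=
  φ2 ∘ₗ M.α = N.α ∘ₗ φ1 ∧ φ1 ∘ₗ M.β = N.β ∘ₗ φ2 ∧ φ2 ∘ₗ M.η = N.η ∘ₗ φ2

/-- An isomorphism of `Γ_con`-modules is a pair of linear isomorphisms commuting with the
structure maps. -/
def Iso (M N : GamRep K k) : Prop :=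
  ∃ (φ1 : M.V1 ≃ₗ[K] N.V1) (φ2 : M.V2 ≃ₗ[K] N.V2),
    M.IsHom N (φ1 : M.V1 →ₗ[K] N.V1) (φ2 : M.V2 →ₗ[K] N.V2)

/-- The zero representation: both underlying vector spaces are trivial. -/
def IsZero (M : GamRep K k) : Prop := Subsingleton M.V1 ∧ Subsingleton M.V2

theorem prodMap_pow {V W : Type} [AddCommGroup V] [Module K V] [AddCommGroup W] [Module K W]
    (f : V →ₗ[K] V) (g : W →ₗ[K] W) (n : ℕ) :
    (f.prodMap g) ^ n = (f ^ n).prodMap (g ^ n) := by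
  induction n with
  | zero => ext <;> simp
  | succ n ih => rw [pow_succ, pow_succ, pow_succ, ih, LinearMap.prodMap_mul]

/-- The direct sum of two representations, taken componentwise. -/
def dsum (M N : GamRep K k) : GamRep K k where
  V1 := M.V1 × N.V1
  V2 := M.V2 × N.V2
  α := M.α.prodMap N.α
  β := M.β.prodMap N.β
  η := M.η.prodMap N.η
  rel1 := by
    rw [show (M.α.prodMap N.α) ∘ₗ (M.β.prodMap N.β) = (M.α ∘ₗ M.β).prodMap (N.α ∘ₗ N.β) from
      LinearMap.prodMap_comp _ _ _ _, M.rel1, N.rel1, prodMap_pow]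
  rel2 := by
    rw [show (M.η.prodMap N.η) ∘ₗ (M.α.prodMap N.α) = (M.η ∘ₗ M.α).prodMap (N.η ∘ₗ N.α) from
      LinearMap.prodMap_comp _ _ _ _, M.rel2, N.rel2, LinearMap.prodMap_zero]
  rel3 := by
    rw [show (M.β.prodMap N.β) ∘ₗ (M.η.prodMap N.η) = (M.β ∘ₗ M.η).prodMap (N.β ∘ₗ N.η) from
      LinearMap.prodMap_comp _ _ _ _, M.rel3, N.rel3, LinearMap.prodMap_zero]

/-- A representation is indecomposable if it is nonzero and not isomorphic to a direct sum
of two nonzero representations. -/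
def Indecomposable (M : GamRep K k) : Prop :=
  ¬ M.IsZero ∧ ∀ N P : GamRep K k, M.Iso (N.dsum P) → N.IsZero ∨ P.IsZero

/-- The endomorphism space of a representation, as a `K`-subspace of the product of the two
spaces of linear endomorphisms. -/
def endSpace (M : GamRep K k) :
    Submodule K ((M.V1 →ₗ[K] M.V1) × (M.V2 →ₗ[K] M.V2)) where
  carrier := {φ | M.IsHom M φ.1 φ.2}
  zero_mem' := by
    refine ⟨?_, ?_, ?_⟩ <;> simp [LinearMap.zero_comp, LinearMap.comp_zero]
  add_mem' := by
    rintro φ ψ ⟨h1, h2, h3⟩ ⟨h4, h5, h6⟩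
    refine ⟨?_, ?_, ?_⟩
    · simp only [Prod.fst_add, Prod.snd_add, LinearMap.add_comp, LinearMap.comp_add, h1, h4]
    · simp only [Prod.fst_add, Prod.snd_add, LinearMap.add_comp, LinearMap.comp_add, h2, h5]
    · simp only [Prod.fst_add, Prod.snd_add, LinearMap.add_comp, LinearMap.comp_add, h3, h6]
  smul_mem' := by
    rintro c φ ⟨h1, h2, h3⟩
    refine ⟨?_, ?_, ?_⟩
    · simp only [Prod.smul_fst, Prod.smul_snd, LinearMap.smul_comp, LinearMap.comp_smul, h1]
    · simp only [Prod.smul_fst, Prod.smul_snd, LinearMap.smul_comp, LinearMap.comp_smul, h2]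
    · simp only [Prod.smul_fst, Prod.smul_snd, LinearMap.smul_comp, LinearMap.comp_smul, h3]

variable (K)

/-- The simple module `S₁ = (K, 0)` with all structure maps zero (a representation whenever
`k ≥ 1`). -/
def S1 (hk : 1 ≤ k) : GamRep K k where
  V1 := K
  V2 := PUnit
  α := 0
  β := 0
  η := 0
  rel1 := by rw [LinearMap.zero_comp, zero_pow (Nat.one_le_iff_ne_zero.mp hk)]
  rel2 := by rw [LinearMap.comp_zero]
  rel3 := by rw [LinearMap.comp_zero]

/-- The simple module `S₂ = (0, K)` with all structure maps zero (a representation whenever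
`k ≥ 1`). -/
def S2 (hk : 1 ≤ k) : GamRep K k where
  V1 := PUnit
  V2 := K
  α := 0
  β := 0
  η := 0
  rel1 := by rw [LinearMap.zero_comp, zero_pow (Nat.one_le_iff_ne_zero.mp hk)]
  rel2 := by rw [LinearMap.comp_zero]
  rel3 := by rw [LinearMap.comp_zero]

/-- The module `M₁ = (K, K, α = id, β = 0, η = 0)` (a representation whenever `k ≥ 1`). -/
def M1 (hk : 1 ≤ k) : GamRep K k where
  V1 := K
  V2 := K
  α := LinearMap.id
  β := 0
  η := 0
  rel1 := by rw [LinearMap.comp_zero, zero_pow (Nat.one_le_iff_ne_zero.mp hk)]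
  rel2 := by rw [LinearMap.zero_comp]
  rel3 := by rw [LinearMap.comp_zero]

/-- The module `M₂ = (K, K, α = 0, β = id, η = 0)` (a representation whenever `k ≥ 1`). -/
def M2 (hk : 1 ≤ k) : GamRep K k where
  V1 := K
  V2 := K
  α := 0
  β := LinearMap.id
  η := 0
  rel1 := by rw [LinearMap.zero_comp, zero_pow (Nat.one_le_iff_ne_zero.mp hk)]
  rel2 := by rw [LinearMap.comp_zero]
  rel3 := by rw [LinearMap.comp_zero]

end GamRep

/-!
Write `f = β ∘ α` for the cycle at vertex 1. A morphism `M₁ → X` is the same as a vector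
`v ∈ V₁` with `f v = 0`, and a morphism `X → M₂` is the same as a functional on `V₁`
vanishing on the range of `f`; so (i) says `f` is injective and (ii) that it is surjective,
which agree in finite dimension.
The relations give `α ∘ f = η^k ∘ α = 0`, so a surjective `f` forces `α = 0`, hence `f = 0`,
and an invertible `f` can only be zero on `V₁ = 0`.
-/

namespace GamRep

variable {K : Type} [Field K] {k : ℕ} (X : GamRep K k)

theorem α_comp_β_comp_α_eq_zero (hk : k ≠ 0) : X.α ∘ₗ X.β ∘ₗ X.α = 0 := by
  obtain ⟨m, rfl⟩ := Nat.exists_eq_succ_of_ne_zero hk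
  rw [← LinearMap.comp_assoc, X.rel1, pow_succ, Module.End.mul_eq_comp, LinearMap.comp_assoc,
    X.rel2, LinearMap.comp_zero]

theorem subsingleton_V1_iff_injective (hk : k ≠ 0) :
    Subsingleton X.V1 ↔ Function.Injective (X.β ∘ₗ X.α) := by
  refine ⟨fun _ => Function.injective_of_subsingleton _, fun hinj => ?_⟩
  have hα : X.α = 0 := by
    rw [← LinearMap.cancel_right (LinearMap.injective_iff_surjective.mp hinj),
      α_comp_β_comp_α_eq_zero X hk, LinearMap.zero_comp]
  refine ⟨fun a b => hinj ?_⟩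
  simp only [hα, LinearMap.comp_zero, LinearMap.zero_apply]

theorem isHom_M1_iff (hk : 1 ≤ k) (φ1 : K →ₗ[K] X.V1) (φ2 : K →ₗ[K] X.V2) :
    (M1 K hk).IsHom X φ1 φ2 ↔ φ2 = X.α ∘ₗ φ1 ∧ X.β (X.α (φ1 1)) = 0 := by
  change φ2 ∘ₗ (LinearMap.id : K →ₗ[K] K) = X.α ∘ₗ φ1 ∧ φ1 ∘ₗ (0 : K →ₗ[K] K) = X.β ∘ₗ φ2 ∧
    φ2 ∘ₗ (0 : K →ₗ[K] K) = X.η ∘ₗ φ2 ↔ _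
  simp only [LinearMap.comp_id, LinearMap.comp_zero]
  constructor
  · rintro ⟨rfl, hβ, -⟩
    exact ⟨rfl, (LinearMap.congr_fun hβ 1).symm⟩
  · rintro ⟨rfl, hβ⟩
    refine ⟨rfl, (LinearMap.ext_ring hβ).symm, ?_⟩
    rw [← LinearMap.comp_assoc, X.rel2, LinearMap.zero_comp]

theorem isHom_M2_iff (hk : 1 ≤ k) (φ1 : X.V1 →ₗ[K] K) (φ2 : X.V2 →ₗ[K] K) :
    X.IsHom (M2 K hk) φ1 φ2 ↔ φ2 = φ1 ∘ₗ X.β ∧ φ1 ∘ₗ X.β ∘ₗ X.α = 0 := by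
  change φ2 ∘ₗ X.α = (0 : K →ₗ[K] K) ∘ₗ φ1 ∧ φ1 ∘ₗ X.β = (LinearMap.id : K →ₗ[K] K) ∘ₗ φ2 ∧
    φ2 ∘ₗ X.η = (0 : K →ₗ[K] K) ∘ₗ φ2 ↔ _
  simp only [LinearMap.id_comp, LinearMap.zero_comp]
  constructor
  · rintro ⟨hα, rfl, -⟩
    exact ⟨rfl, hα⟩
  · rintro ⟨rfl, hα⟩
    exact ⟨hα, rfl, by rw [LinearMap.comp_assoc, X.rel3, LinearMap.comp_zero]⟩

theorem homs_from_M1_eq_zero_iff (hk : 1 ≤ k) :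
    (∀ (φ1 : K →ₗ[K] X.V1) (φ2 : K →ₗ[K] X.V2), (M1 K hk).IsHom X φ1 φ2 → φ1 = 0 ∧ φ2 = 0) ↔
      Function.Injective (X.β ∘ₗ X.α) := by
  simp_rw [isHom_M1_iff, injective_iff_map_eq_zero]
  refine ⟨fun h v hv => ?_, fun h φ1 φ2 ⟨hφ2, hφ1⟩ => ?_⟩
  · have := h (LinearMap.toSpanSingleton K X.V1 v) _ ⟨rfl, by simpa using hv⟩
    simpa using LinearMap.congr_fun this.1 1
  · have : φ1 = 0 := LinearMap.ext_ring (h _ hφ1)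
    simp [this, hφ2]

theorem homs_to_M2_eq_zero_iff (hk : 1 ≤ k) :
    (∀ (φ1 : X.V1 →ₗ[K] K) (φ2 : X.V2 →ₗ[K] K), X.IsHom (M2 K hk) φ1 φ2 → φ1 = 0 ∧ φ2 = 0) ↔
      Function.Surjective (X.β ∘ₗ X.α) := by
  simp_rw [isHom_M2_iff, ← LinearMap.dualMap_injective_iff, injective_iff_map_eq_zero]
  refine ⟨fun h φ hφ => (h φ _ ⟨rfl, hφ⟩).1, fun h φ1 φ2 ⟨hφ2, hφ1⟩ => ?_⟩
  have : φ1 = 0 := h φ1 hφ1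
  simp [this, hφ2]

end GamRep

theorem gam_orthogonality_to_M1_M2_general (K : Type) [Field K] (k : ℕ) (hk : 1 ≤ k)
    (X : GamRep K k) :
    ((∀ (φ1 : K →ₗ[K] X.V1) (φ2 : K →ₗ[K] X.V2),
        (GamRep.M1 K hk).IsHom X φ1 φ2 → φ1 = 0 ∧ φ2 = 0) ↔ Subsingleton X.V1) ∧
    ((∀ (φ1 : X.V1 →ₗ[K] K) (φ2 : X.V2 →ₗ[K] K),
        X.IsHom (GamRep.M2 K hk) φ1 φ2 → φ1 = 0 ∧ φ2 = 0) ↔ Subsingleton X.V1) := by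
  rw [X.homs_from_M1_eq_zero_iff, X.homs_to_M2_eq_zero_iff, ← LinearMap.injective_iff_surjective,
    X.subsingleton_V1_iff_injective (Nat.one_le_iff_ne_zero.mp hk)]
  exact ⟨.rfl, .rfl⟩

/-- For a finite-dimensional `Γ_con`-module `X = (V₁, V₂, α, β, η)` the following are
equivalent: (i) the only morphism `M₁ → X` is zero; (ii) the only morphism `X → M₂` is
zero; (iii) `V₁ = 0`, i.e. `X` is filtered by the simple `S₂` alone. -/
theorem gam_orthogonality_to_M1_M2 (K : Type) [Field K] [IsAlgClosed K] (k : ℕ) (hk : 1 ≤ k)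
    (X : GamRep K k) :
    ((∀ (φ1 : K →ₗ[K] X.V1) (φ2 : K →ₗ[K] X.V2),
        (GamRep.M1 K hk).IsHom X φ1 φ2 → φ1 = 0 ∧ φ2 = 0) ↔ Subsingleton X.V1) ∧
    ((∀ (φ1 : X.V1 →ₗ[K] K) (φ2 : X.V2 →ₗ[K] K),
        X.IsHom (GamRep.M2 K hk) φ1 φ2 → φ1 = 0 ∧ φ2 = 0) ↔ Subsingleton X.V1) :=
  gam_orthogonality_to_M1_M2_general K k hk X
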